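/- Let p ∈ (2, ∞), q = p/(p−1), k > 0, and λ = (p−1)(k−1) + 1, and assume λ > 0. Let f be a twice continuously differentiable function on an open interval I with k²·f(φ)² + f′(φ)² > 0 for all φ ∈ I, and suppose f satisfies the separation equation with parameters (k, b) on I, where b = 1/(p−2). Define g(φ) = −(1/λ)·f′(φ)·(k²·f(φ)² + f′(φ)²)^{(p−2)/2} on I. Then g is twice continuously differentiable on I and satisfies: (i) g′(φ) = k·f(φ)·(k²·f(φ)² + f′(φ)²)^{(p−2)/2}; (ii) λ²·g(φ)² + g′(φ)² = (k²·f(φ)² + f′(φ)²)^{p−1}; and (iii) g satisfies the separation equation with parameters (λ, 1/(q−2)) on I. -/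

import Mathlib

open Real Set

/-- The separation equation with parameters `(k, b)` for a function `f` at angle `φ`:
`((b+1) f'² + b k² f²) f'' + (2k + bk − 1) k f f'² + (bk + k − 1) k³ f³ = 0`. -/
def SepEq (k b : ℝ) (f : ℝ → ℝ) (φ : ℝ) : Prop :=
  ((b + 1) * (deriv f φ)^2 + b * k^2 * (f φ)^2) * deriv (deriv f) φ
    + (2*k + b*k - 1) * k * f φ * (deriv f φ)^2
    + (b*k + k - 1) * k^3 * (f φ)^3 = 0

/-- Core algebraic certificate for part (iii). -/
lemma sep_cert (p k lam b G F F1 F2 P W G1 G2 : ℝ) (hp2 : p - 2 ≠ 0)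
    (hlam : lam = (p-1)*(k-1)+1)
    (hb : b * (p-2) = -(p-1))
    (hG : lam * G = -(F1*P))
    (hE : ((p-1)*F1^2 + k^2*F^2)*F2 + ((2*k-1)*(p-2)+k)*k*F*F1^2 + lam*k^3*F^3 = 0)
    (hPW : W * (k^2*F^2 + F1^2) = P)
    (hG1 : G1 = k*F*P)
    (hG2 : G2 = k*F1*P + k*F*((k^2*(2*F*F1) + 2*F1*F2) * ((p-2)/2) * W)) :
    ((b + 1) * G1^2 + b * lam^2 * G^2) * G2
      + (2*lam + b*lam - 1) * lam * G * G1^2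
      + (b*lam + lam - 1) * lam^3 * G^3 = 0 := by
  subst hG1 hG2
  have key : (p-2) * (((b + 1) * (k*F*P)^2 + b * lam^2 * G^2) *
        (k*F1*P + k*F*((k^2*(2*F*F1) + 2*F1*F2) * ((p-2)/2) * W))
      + (2*lam + b*lam - 1) * lam * G * (k*F*P)^2
      + (b*lam + lam - 1) * lam^3 * G^3) = (p-2) * 0 := by
    rw [mul_zero]
    linear_combination (p*k^5*F^4*F1*P^2*W + p*k^3*lam^2*F^2*F1*W*G^2 + p*k^3*F^3*F1*F2*P^2*W + p*k*lam^2*F*F1*F2*W*G^2 + -2*k^5*F^4*F1*P^2*W + -2*k^3*lam^2*F^2*F1*W*G^2 + -2*k^3*F^3*F1*F2*P^2*W + k^3*F^2*F1*P^3 + k^2*lam^2*F^2*P^2*G + -2*k*lam^2*F*F1*F2*W*G^2 + k*lam^2*F1*P*G^2 + lam^4*G^3) * hb + (-1*p^2*k^3*lam*F^2*F1*W*G + p^2*k^3*F^2*F1^2*P*W + -1*p^2*k*lam*F*F1*F2*W*G + p^2*k*F*F1^2*F2*P*W + 3*p*k^3*lam*F^2*F1*W*G + -3*p*k^3*F^2*F1^2*P*W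 + p*k^2*lam*F^2*P^2 + -1*p*k^2*F^2*P^2 + 3*p*k*lam*F*F1*F2*W*G + -1*p*k*lam*F1*P*G + -3*p*k*F*F1^2*F2*P*W + p*k*F1^2*P^2 + -1*p*lam^2*G^2 + p*lam*F1*P*G + -1*p*F1^2*P^2 + -2*k^3*lam*F^2*F1*W*G + 2*k^3*F^2*F1^2*P*W + -3*k^2*lam*F^2*P^2 + 2*k^2*F^2*P^2 + -2*k*lam*F*F1*F2*W*G + k*lam*F1*P*G + 2*k*F*F1^2*F2*P*W + -1*k*F1^2*P^2 + -1*lam^3*G^2 + lam^2*F1*P*G + 2*lam^2*G^2 + -1*lam*F1^2*P^2 + -2*lam*F1*P*G + 2*F1^2*P^2) * hG +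
      (p*k^4*F^4*F1*P^2*W + -1*p*k^2*F^2*F1*P^3 + -2*k^4*F^4*F1*P^2*W + 3*k^2*F^2*F1*P^3 + F1^3*P^3) * hlam + (-1*p*k*F*F1*P^2*W + 2*k*F*F1*P^2*W) * hE + (p^2*k^3*F^2*F1*P^2 + -1*p^2*k^2*F^2*F1*P^2 + -4*p*k^3*F^2*F1*P^2 + 4*p*k^2*F^2*F1*P^2 + 4*k^3*F^2*F1*P^2 + -4*k^2*F^2*F1*P^2) * hPW
  exact mul_left_cancel₀ hp2 key
set_option maxHeartbeats 1000000 in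
theorem statement_15 (p q k lam A B : ℝ) (hp : 2 < p) (hq : q = p / (p - 1))
    (hk : 0 < k) (hlam : lam = (p - 1) * (k - 1) + 1) (hlampos : 0 < lam)
    (f g : ℝ → ℝ) (hf : ContDiffOn ℝ 2 f (Set.Ioo A B))
    (hpos : ∀ φ ∈ Set.Ioo A B, 0 < k^2 * (f φ)^2 + (deriv f φ)^2)
    (hsep : ∀ φ ∈ Set.Ioo A B, SepEq k (1/(p - 2)) f φ)
    (hg : ∀ φ : ℝ,
      g φ = -(1/lam) * deriv f φ * (k^2 * (f φ)^2 + (deriv f φ)^2) ^ ((p - 2)/2)) :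
    ContDiffOn ℝ 2 g (Set.Ioo A B) ∧
    ∀ φ ∈ Set.Ioo A B,
      deriv g φ = k * f φ * (k^2 * (f φ)^2 + (deriv f φ)^2) ^ ((p - 2)/2) ∧
      lam^2 * (g φ)^2 + (deriv g φ)^2 = (k^2 * (f φ)^2 + (deriv f φ)^2) ^ (p - 1) ∧
      SepEq lam (1/(q - 2)) g φ := by
  have hI : IsOpen (Set.Ioo A B) := isOpen_Ioo
  have hp2 : p - 2 ≠ 0 := ne_of_gt (by linarith)
  have hp1 : p - 1 ≠ 0 := ne_of_gt (by linarith)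
  have hlamne : lam ≠ 0 := ne_of_gt hlampos
  -- b = 1/(q-2) relation
  have hq2 : q - 2 = -((p-2)/(p-1)) := by
    rw [hq]; field_simp; ring
  have hb : (1/(q - 2)) * (p - 2) = -(p - 1) := by
    rw [hq2, one_div, inv_neg, inv_div, neg_mul, div_mul_cancel₀ _ hp2]
  -- differentiability of f
  have hf1 : ContDiffOn ℝ 1 (deriv f) (Set.Ioo A B) := hf.deriv_of_isOpen hI (by norm_num)
  have hfd : ∀ φ ∈ Set.Ioo A B, HasDerivAt f (deriv f φ) φ := fun φ hφ =>
    ((hf.differentiableOn (by norm_num)).differentiableAt (hI.mem_nhds hφ)).hasDerivAt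
  have hfd2 : ∀ φ ∈ Set.Ioo A B, HasDerivAt (deriv f) (deriv (deriv f) φ) φ := fun φ hφ =>
    ((hf1.differentiableOn (by norm_num)).differentiableAt (hI.mem_nhds hφ)).hasDerivAt
  set Q : ℝ → ℝ := fun φ => k^2 * (f φ)^2 + (deriv f φ)^2 with hQdef
  set P : ℝ → ℝ := fun φ => Q φ ^ ((p-2)/2) with hPdef
  have hQpos : ∀ φ ∈ Set.Ioo A B, 0 < Q φ := hpos
  have hQd : ∀ φ ∈ Set.Ioo A B, HasDerivAt Q
      (k^2 * (2 * f φ ^ 1 * deriv f φ) + 2 * deriv f φ ^ 1 * deriv (deriv f) φ) φ := fun φ hφ =>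
    (((hfd φ hφ).pow 2).const_mul (k^2)).add ((hfd2 φ hφ).pow 2)
  have hPd : ∀ φ ∈ Set.Ioo A B, HasDerivAt P
      ((k^2 * (2 * f φ ^ 1 * deriv f φ) + 2 * deriv f φ ^ 1 * deriv (deriv f) φ) * ((p-2)/2)
        * Q φ ^ ((p-2)/2 - 1)) φ := fun φ hφ =>
    (hQd φ hφ).rpow_const (Or.inl (ne_of_gt (hQpos φ hφ)))
  have hgfun : g = fun φ => -(1/lam) * deriv f φ * P φ := funext hg
  -- the cleared separation equation
  have hE : ∀ φ ∈ Set.Ioo A B,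
      ((p-1)*(deriv f φ)^2 + k^2*(f φ)^2)*(deriv (deriv f) φ)
        + ((2*k-1)*(p-2)+k)*k*(f φ)*(deriv f φ)^2 + lam*k^3*(f φ)^3 = 0 := by
    intro φ hφ
    have h := hsep φ hφ
    unfold SepEq at h
    have hc : (1/(p-2)) * (p-2) = 1 := by field_simp
    linear_combination (p-2) * h -
      (((deriv f φ)^2 + k^2*(f φ)^2) * (deriv (deriv f) φ)
        + k^2*(f φ)*(deriv f φ)^2 + k^4*(f φ)^3) * hc + k^3*(f φ)^3 * hlam
  -- the power relation W * Q = P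
  have hPW : ∀ φ ∈ Set.Ioo A B,
      Q φ ^ ((p-2)/2 - 1) * (k^2*(f φ)^2 + (deriv f φ)^2) = P φ := by
    intro φ hφ
    have h1 : Q φ ^ ((p-2)/2 - 1) * Q φ = Q φ ^ (((p-2)/2 - 1) + 1) :=
      (Real.rpow_add_one (ne_of_gt (hQpos φ hφ)) _).symm
    calc Q φ ^ ((p-2)/2 - 1) * (k^2*(f φ)^2 + (deriv f φ)^2)
        = Q φ ^ (((p-2)/2 - 1) + 1) := h1
      _ = P φ := by rw [hPdef]; norm_num
  -- first derivative of g
  have hgd : ∀ φ ∈ Set.Ioo A B, HasDerivAt g (k * f φ * P φ) φ := by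
    intro φ hφ
    have h0 : HasDerivAt g
        ((-(1/lam) * deriv (deriv f) φ) * P φ + (-(1/lam) * deriv f φ) *
          ((k^2 * (2 * f φ ^ 1 * deriv f φ) + 2 * deriv f φ ^ 1 * deriv (deriv f) φ) * ((p-2)/2)
            * Q φ ^ ((p-2)/2 - 1))) φ := by
      rw [hgfun]
      exact ((hfd2 φ hφ).const_mul (-(1/lam))).mul (hPd φ hφ)
    have key : deriv (deriv f) φ * P φ + deriv f φ *
        ((k^2 * (2 * f φ ^ 1 * deriv f φ) + 2 * deriv f φ ^ 1 * deriv (deriv f) φ) * ((p-2)/2)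
          * Q φ ^ ((p-2)/2 - 1)) = -(lam * (k * f φ * P φ)) := by
      linear_combination (Q φ ^ ((p-2)/2 - 1)) * hE φ hφ -
        (deriv (deriv f) φ + lam*k*(f φ)) * hPW φ hφ +
        (Q φ ^ ((p-2)/2 - 1))*k*(f φ)*(deriv f φ)^2 * hlam
    have hval : (-(1/lam) * deriv (deriv f) φ) * P φ + (-(1/lam) * deriv f φ) *
        ((k^2 * (2 * f φ ^ 1 * deriv f φ) + 2 * deriv f φ ^ 1 * deriv (deriv f) φ) * ((p-2)/2)
          * Q φ ^ ((p-2)/2 - 1)) = k * f φ * P φ := by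
      have expand : (-(1/lam) * deriv (deriv f) φ) * P φ + (-(1/lam) * deriv f φ) *
          ((k^2 * (2 * f φ ^ 1 * deriv f φ) + 2 * deriv f φ ^ 1 * deriv (deriv f) φ) * ((p-2)/2)
            * Q φ ^ ((p-2)/2 - 1)) =
          -(1/lam) * (deriv (deriv f) φ * P φ + deriv f φ *
            ((k^2 * (2 * f φ ^ 1 * deriv f φ) + 2 * deriv f φ ^ 1 * deriv (deriv f) φ) * ((p-2)/2)
              * Q φ ^ ((p-2)/2 - 1))) := by ring
      rw [expand, key]
      field_simp
    rw [hval] at h0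
    exact h0
  have hgderiv : ∀ φ ∈ Set.Ioo A B, deriv g φ = k * f φ * P φ := fun φ hφ => (hgd φ hφ).deriv
  -- second derivative of g
  have hgd2 : ∀ φ ∈ Set.Ioo A B, HasDerivAt (deriv g)
      ((k * deriv f φ) * P φ + (k * f φ) *
        ((k^2 * (2 * f φ ^ 1 * deriv f φ) + 2 * deriv f φ ^ 1 * deriv (deriv f) φ) * ((p-2)/2)
          * Q φ ^ ((p-2)/2 - 1))) φ := by
    intro φ hφ
    have h0 : HasDerivAt (fun t => k * f t * P t)
        ((k * deriv f φ) * P φ + (k * f φ) *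
          ((k^2 * (2 * f φ ^ 1 * deriv f φ) + 2 * deriv f φ ^ 1 * deriv (deriv f) φ) * ((p-2)/2)
            * Q φ ^ ((p-2)/2 - 1))) φ :=
      ((hfd φ hφ).const_mul k).mul (hPd φ hφ)
    exact h0.congr_of_eventuallyEq
      (Filter.eventually_of_mem (hI.mem_nhds hφ) (fun x hx => hgderiv x hx))
  -- continuity class of g
  have hfC1 : ContDiffOn ℝ 1 f (Set.Ioo A B) := hf.of_le (by norm_num)
  have hQc : ContDiffOn ℝ 1 Q (Set.Ioo A B) :=
    (contDiffOn_const.mul (hfC1.pow 2)).add (hf1.pow 2)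
  have hPc : ContDiffOn ℝ 1 P (Set.Ioo A B) := by
    intro φ hφ
    exact ((hQc.contDiffAt (hI.mem_nhds hφ)).rpow_const_of_ne
      (ne_of_gt (hQpos φ hφ))).contDiffWithinAt
  have hgC2 : ContDiffOn ℝ 2 g (Set.Ioo A B) := by
    rw [show (2 : WithTop ℕ∞) = 1 + 1 by norm_num]
    rw [contDiffOn_succ_iff_deriv_of_isOpen hI]
    refine ⟨fun φ hφ => (hgd φ hφ).differentiableAt.differentiableWithinAt, ?_, ?_⟩
    · intro h; simp at h
    · exact ((contDiffOn_const.mul hfC1).mul hPc).congr (fun x hx => hgderiv x hx)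
  refine ⟨hgC2, fun φ hφ => ⟨hgderiv φ hφ, ?_, ?_⟩⟩
  · -- the Pythagorean identity
    have hGrel : lam * g φ = -(deriv f φ * P φ) := by
      rw [hg φ]; simp only [hPdef, hQdef]; field_simp
    have hPP : P φ * P φ = Q φ ^ (p-2) := by
      rw [hPdef]
      calc Q φ ^ ((p-2)/2) * Q φ ^ ((p-2)/2) = Q φ ^ ((p-2)/2 + (p-2)/2) :=
            (Real.rpow_add (hQpos φ hφ) _ _).symm
        _ = Q φ ^ (p-2) := by norm_num
    have hQ1 : (k^2 * (f φ)^2 + (deriv f φ)^2) ^ (p-1) = Q φ ^ (p-2) * Q φ := by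
      rw [show p - 1 = (p-2) + 1 by ring]
      exact Real.rpow_add_one (ne_of_gt (hQpos φ hφ)) _
    rw [hgderiv φ hφ]
    linear_combination (lam * g φ - deriv f φ * P φ) * hGrel +
      (k^2*(f φ)^2 + (deriv f φ)^2) * hPP - hQ1
  · -- the separation equation for g
    unfold SepEq
    exact sep_cert p k lam (1/(q-2)) (g φ) (f φ) (deriv f φ) (deriv (deriv f) φ)
      (P φ) (Q φ ^ ((p-2)/2 - 1)) (deriv g φ) (deriv (deriv g) φ) hp2 hlam hb
      (by rw [hg φ]; simp only [hPdef, hQdef]; field_simp) (hE φ hφ) (hPW φ hφ)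
      (hgderiv φ hφ)
      (by rw [(hgd2 φ hφ).deriv]; ring)
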